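/- arXiv:1106.3250 — 8 statements merged into one kernel-verified Lean document; each statement's English description precedes it below -/
import Mathlib

section
/- Let C be a simplicial complex and B a building set of C. If β is a maximal element (with respect to inclusion) of C − B, then B ∪ {β} is again a building set of C. -/
/-- A (finite abstract) simplicial complex: a family of finite sets
containing the empty set and closed under taking subsets. -/
def IsSimplicialComplex {V : Type*} (C : Set (Finset V)) : Prop :=
  ∅ ∈ C ∧ ∀ α ∈ C, ∀ β ⊆ α, β ∈ C

/-- A building set of the power set P(γ): a family containing all singletons
{a} for a ∈ γ and closed under unions of intersecting members. -/
def IsBuildingSetOfPowerset {V : Type*} [DecidableEq V]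
    (γ : Finset V) (B : Set (Finset V)) : Prop :=
  (∀ β ∈ B, ∀ δ ∈ B, (β ∩ δ).Nonempty → β ∪ δ ∈ B) ∧
  (∀ a ∈ γ, ({a} : Finset V) ∈ B)

/-- B ⊆ C is a building set of the simplicial complex C when for each γ ∈ C,
B ∩ P(γ) is a building set of P(γ). -/
def IsBuildingSet {V : Type*} [DecidableEq V] (C B : Set (Finset V)) : Prop :=
  B ⊆ C ∧ ∀ γ ∈ C, IsBuildingSetOfPowerset γ {β ∈ B | β ⊆ γ}

/-- If B is a building set of C and β is maximal (w.r.t. inclusion) in C − B,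
then B ∪ {β} is again a building set of C. -/
theorem stmt4 {V : Type*} [DecidableEq V]
    (C B : Set (Finset V)) (hC : IsSimplicialComplex C)
    (hB : IsBuildingSet C B) (β : Finset V)
    (hβ : β ∈ C \ B) (hmax : ∀ γ ∈ C \ B, β ⊆ γ → γ = β) :
    IsBuildingSet C (B ∪ {β}) := by
  obtain ⟨hBC, hBloc⟩ := hB
  constructor
  · rintro δ (hδ | rfl)
    · exact hBC hδ
    · exact hβ.1
  · intro γ hγ
    obtain ⟨hunion, hsing⟩ := hBloc γ hγ
    have key : ∀ δ₁ δ₂ : Finset V, δ₁ ∈ B → δ₁ ⊆ γ → δ₂ = β → δ₂ ⊆ γ →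
        (δ₁ ∩ δ₂).Nonempty → δ₁ ∪ δ₂ ∈ B ∪ {β} := by
      rintro δ₁ δ₂ h1 h1γ heq h2γ _
      subst heq
      have hmem : δ₁ ∪ δ₂ ∈ C := hC.2 γ hγ _ (Finset.union_subset h1γ h2γ)
      by_cases hb : δ₁ ∪ δ₂ ∈ B
      · exact Or.inl hb
      · have := hmax (δ₁ ∪ δ₂) ⟨hmem, hb⟩ Finset.subset_union_right
        exact Or.inr this
    refine ⟨?_, fun a ha => ?_⟩
    · rintro δ₁ ⟨(h1 | h1), h1γ⟩ δ₂ ⟨(h2 | h2), h2γ⟩ hne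
      · exact ⟨Or.inl (hunion δ₁ ⟨h1, h1γ⟩ δ₂ ⟨h2, h2γ⟩ hne).1,
          Finset.union_subset h1γ h2γ⟩
      · exact ⟨key δ₁ δ₂ h1 h1γ h2 h2γ hne, Finset.union_subset h1γ h2γ⟩
      · have := key δ₂ δ₁ h2 h2γ h1 h1γ (by rwa [Finset.inter_comm] at hne)
        rw [Finset.union_comm] at this
        exact ⟨this, Finset.union_subset h1γ h2γ⟩
      · subst h1; subst h2
        simp only [Finset.union_self]
        exact ⟨Or.inr rfl, h1γ⟩
    · obtain ⟨hs, hsγ⟩ := hsing a ha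
      exact ⟨Or.inl hs, hsγ⟩
end

section
/- Let C be a simplicial complex and B a building set of C. If β is a minimal element of B − B⊥, where B⊥ = {{a} : a ∈ ⋃C} is the set of singletons, then B − {β} is a building set of C. -/
/-- If B is a building set of C and β is minimal in B − B⊥, where
B⊥ = {{a} : a ∈ ⋃C}, then B − {β} is a building set of C. -/
theorem stmt5 {V : Type*} [DecidableEq V]
    (C B : Set (Finset V)) (hC : IsSimplicialComplex C)
    (hB : IsBuildingSet C B) (β : Finset V)
    (hβ : β ∈ B \ {s : Finset V | ∃ a, (∃ γ ∈ C, a ∈ γ) ∧ s = {a}})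
    (hmin : ∀ γ ∈ B \ {s : Finset V | ∃ a, (∃ γ' ∈ C, a ∈ γ') ∧ s = {a}},
      γ ⊆ β → γ = β) :
    IsBuildingSet C (B \ {β}) := by
  obtain ⟨hBC, hBP⟩ := hB
  obtain ⟨hβB, hβns⟩ := hβ
  constructor
  · exact fun x hx => hBC hx.1
  · intro γ hγ
    obtain ⟨hU, hS⟩ := hBP γ hγ
    constructor
    · rintro b ⟨⟨hbB, hbne⟩, hbγ⟩ d ⟨⟨hdB, hdne⟩, hdγ⟩ hbd
      have hub : b ∪ d ∈ B ∧ b ∪ d ⊆ γ := hU b ⟨hbB, hbγ⟩ d ⟨hdB, hdγ⟩ hbd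
      refine ⟨⟨hub.1, ?_⟩, hub.2⟩
      intro heq
      have heq : b ∪ d = β := heq
      -- b ⊆ β, b ≠ β ⇒ b is a singleton
      have hbsing : ∃ a, (∃ γ' ∈ C, a ∈ γ') ∧ b = {a} := by
        by_contra h
        exact hbne (hmin b ⟨hbB, h⟩ (heq ▸ Finset.subset_union_left))
      have hdsing : ∃ a, (∃ γ' ∈ C, a ∈ γ') ∧ d = {a} := by
        by_contra h
        exact hdne (hmin d ⟨hdB, h⟩ (heq ▸ Finset.subset_union_right))
      obtain ⟨a, ha, rfl⟩ := hbsing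
      obtain ⟨a', ha', rfl⟩ := hdsing
      obtain ⟨x, hx⟩ := hbd
      simp only [Finset.mem_inter, Finset.mem_singleton] at hx
      obtain ⟨rfl, rfl⟩ := hx
      apply hβns
      exact ⟨x, ha, by simp [← heq]⟩
    · intro a ha
      have h1 : ({a} : Finset V) ∈ B ∧ ({a} : Finset V) ⊆ γ := hS a ha
      refine ⟨⟨h1.1, ?_⟩, h1.2⟩
      intro h
      have h : ({a} : Finset V) = β := h
      exact hβns ⟨a, ⟨γ, hγ, ha⟩, h.symm⟩
end

section
/- Let B be a building set of a simplicial complex C and N ⊆ B. Then the following are equivalent: (1) N is nested in B with respect to C (i.e., for every N-antichain {β₁,…,βₜ}, the union β₁ ∪ … ∪ βₜ belongs to C − B); (2) N ⊆ B, ⋃N ∈ C, and every N-antichain misses B (its union is not in B). -/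
/-- An N-antichain: a subset of N with at least two elements whose members
are pairwise incomparable with respect to inclusion. -/
def IsNAntichain {V : Type*} (N S : Finset (Finset V)) : Prop :=
  S ⊆ N ∧ 2 ≤ S.card ∧ ∀ β ∈ S, ∀ γ ∈ S, β ≠ γ → ¬ β ⊆ γ

/-- N ⊆ B is nested (w.r.t. the building set B of the complex C) when the
union of every N-antichain belongs to C − B. -/
def Nested {V : Type*} [DecidableEq V] (C B : Set (Finset V))
    (N : Finset (Finset V)) : Prop :=
  ↑N ⊆ B ∧ ∀ S : Finset (Finset V), IsNAntichain N S →
    S.sup id ∈ C ∧ S.sup id ∉ B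

/-!
The union of `N` is the union of its maximal members. When there are at least two of them they
form an `N`-antichain, whose union lies in `C` by nestedness; otherwise that union is `∅` or a
single member of `B ⊆ C`. Conversely, the union of an `N`-antichain is a subset of `⋃ N ∈ C`.
-/

namespace Finset

variable {α : Type*}

theorem sup_filter_maximal [SemilatticeSup α] [OrderBot α] (s : Finset α)
    [DecidablePred (Maximal (· ∈ s))] : {a ∈ s | Maximal (· ∈ s) a}.sup id = s.sup id := by
  refine le_antisymm (sup_mono (filter_subset _ _)) (Finset.sup_le fun a ha => ?_)
  obtain ⟨b, hab, hb⟩ := s.exists_le_maximal ha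
  exact hab.trans (le_sup (f := id) (mem_filter.2 ⟨hb.1, hb⟩))

end Finset

section Nested

variable {V : Type*}

theorem isNAntichain_filter_maximal (N : Finset (Finset V)) [DecidablePred (Maximal (· ∈ N))]
    (hcard : 2 ≤ {β ∈ N | Maximal (· ∈ N) β}.card) :
    IsNAntichain N {β ∈ N | Maximal (· ∈ N) β} := by
  refine ⟨Finset.filter_subset _ _, hcard, fun β hβ γ hγ hne hβγ => hne ?_⟩
  exact hβγ.antisymm ((Finset.mem_filter.1 hβ).2.2 (Finset.mem_filter.1 hγ).1 hβγ)

theorem sup_mem_of_forall_isNAntichain [DecidableEq V] {C : Set (Finset V)}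
    {N : Finset (Finset V)} (hempty : ∅ ∈ C) (hNC : ↑N ⊆ C)
    (hanti : ∀ S, IsNAntichain N S → S.sup id ∈ C) : N.sup id ∈ C := by
  classical
  rw [← N.sup_filter_maximal]
  set M := {β ∈ N | Maximal (· ∈ N) β}
  rcases lt_or_ge M.card 2 with hlt | hge
  · obtain ⟨β, hMβ⟩ := Finset.card_le_one_iff_subset_singleton.1 (Nat.lt_succ_iff.1 hlt)
    rcases Finset.subset_singleton_iff.1 hMβ with hM | hM
    · simpa [hM] using hempty
    · have hβ : β ∈ N := Finset.filter_subset _ N (hM ▸ Finset.mem_singleton_self β)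
      simpa [hM] using hNC hβ
  · exact hanti M (isNAntichain_filter_maximal N hge)

end Nested

theorem stmt7_general {V : Type*} [DecidableEq V]
    (C B : Set (Finset V)) (hC : IsSimplicialComplex C)
    (hB : IsBuildingSet C B) (N : Finset (Finset V)) :
    Nested C B N ↔
      (↑N ⊆ B ∧ N.sup id ∈ C ∧
        ∀ S : Finset (Finset V), IsNAntichain N S → S.sup id ∉ B) := by
  constructor
  · rintro ⟨hNB, hanti⟩
    have hsup : N.sup id ∈ C :=
      sup_mem_of_forall_isNAntichain hC.1 (hNB.trans hB.1) fun S hS => (hanti S hS).1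
    exact ⟨hNB, hsup, fun S hS => (hanti S hS).2⟩
  · rintro ⟨hNB, hsup, hmiss⟩
    exact ⟨hNB, fun S hS => ⟨hC.2 _ hsup _ (Finset.sup_mono hS.1), hmiss S hS⟩⟩

/-- For B a building set of a simplicial complex C and N ⊆ B, the following
are equivalent: (1) N is nested; (2) N ⊆ B, ⋃N ∈ C, and every N-antichain
misses B. -/
theorem stmt7 {V : Type*} [DecidableEq V]
    (C B : Set (Finset V)) (hC : IsSimplicialComplex C)
    (hB : IsBuildingSet C B) (N : Finset (Finset V)) (hN : ↑N ⊆ B) :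
    Nested C B N ↔
      (↑N ⊆ B ∧ N.sup id ∈ C ∧
        ∀ S : Finset (Finset V), IsNAntichain N S → S.sup id ∉ B) :=
  stmt7_general C B hC hB N
end

section
/- Let B be a subset of a building set of a simplicial complex. Then the collection of all nested subsets of B forms a simplicial complex; in particular, every subset of a nested set is nested, and the singleton {β} is nested for each β ∈ B, so the union of this complex equals B. -/
/-- The nested subsets of a building set B of a simplicial complex C form a
simplicial complex; every subset of a nested set is nested, each singleton
{β} for β ∈ B is nested, and the union of this complex is exactly B. -/
theorem stmt9 {V : Type*} [DecidableEq V]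
    (C B : Set (Finset V)) (hC : IsSimplicialComplex C)
    (hB : IsBuildingSet C B) :
    IsSimplicialComplex {N : Finset (Finset V) | Nested C B N} ∧
    (∀ N M : Finset (Finset V), Nested C B N → M ⊆ N → Nested C B M) ∧
    (∀ β ∈ B, Nested C B {β}) ∧
    (⋃ N ∈ {N : Finset (Finset V) | Nested C B N}, (↑N : Set (Finset V))) = B := by
  have hsub : ∀ N M : Finset (Finset V), Nested C B N → M ⊆ N → Nested C B M := by
    intro N M hN hMN
    refine ⟨fun x hx => hN.1 (hMN hx), fun S hS => hN.2 S ⟨hS.1.trans hMN, hS.2.1, hS.2.2⟩⟩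
  have hsing : ∀ β ∈ B, Nested C B ({β} : Finset (Finset V)) := by
    intro β hβ
    refine ⟨by simpa using hβ, fun S hS => absurd hS.2.1 ?_⟩
    have hc : S.card ≤ 1 := (Finset.card_le_card hS.1).trans (by simp)
    omega
  have hemp : Nested C B (∅ : Finset (Finset V)) := by
    refine ⟨by simp, fun S hS => absurd hS.2.1 ?_⟩
    have hc : S.card ≤ 0 := (Finset.card_le_card hS.1).trans (by simp)
    omega
  refine ⟨⟨hemp, fun N hN M hM => hsub N M hN hM⟩, hsub, hsing, ?_⟩
  ext β
  simp only [Set.mem_iUnion, Set.mem_setOf_eq]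
  constructor
  · rintro ⟨N, hN, hβ⟩
    exact hN.1 hβ
  · intro hβ
    exact ⟨{β}, hsing β hβ, by simp⟩
end

section
/- Let X be a finite nonempty set and identify T(X), the free commutative semigroup on X, with ℕ^X − {0} via κ_X. Let A, B ⊆ T(X) be finite sets such that the full sum σ_X(X) (the element with all coordinates 1) belongs to A ∩ B, and suppose there exist x, y ∈ X with A − {σ_X(X)} ⊆ T(X − {x}) and B − {σ_X(X)} ⊆ T(X − {y}). If Σ_{a∈A} k_a · κ_X(a) = Σ_{b∈B} l_b · κ_X(b) for positive reals k_a, l_b, then A − {σ_X(X)} and B − {σ_X(X)} are contained in T(X − {x, y}), and k_{σ_X(X)} = l_{σ_X(X)}. -/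
/-- Lemma 6.2: identify T(X) with ℕ^X − {0}. Let A, B be finite subsets of
T(X) both containing the all-ones element σ_X(X), with A − {σ_X(X)} supported
away from x and B − {σ_X(X)} supported away from y. If some positive
combinations of A and of B (under the coefficient embedding κ_X into ℝ^X)
coincide, then A − {σ_X(X)} and B − {σ_X(X)} are supported away from both x
and y, and the coefficients of σ_X(X) agree. -/
theorem stmt12 {X : Type*} [Fintype X] [Nonempty X] [DecidableEq X]
    (A B : Finset (X → ℕ))
    (hAnz : ∀ a ∈ A, a ≠ 0) (hBnz : ∀ b ∈ B, b ≠ 0)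
    (hA1 : (fun _ => 1 : X → ℕ) ∈ A) (hB1 : (fun _ => 1 : X → ℕ) ∈ B)
    (x y : X)
    (hAx : ∀ a ∈ A, a ≠ (fun _ => 1) → a x = 0)
    (hBy : ∀ b ∈ B, b ≠ (fun _ => 1) → b y = 0)
    (k l : (X → ℕ) → ℝ)
    (hk : ∀ a ∈ A, 0 < k a) (hl : ∀ b ∈ B, 0 < l b)
    (heq : ∀ z : X, ∑ a ∈ A, k a * (a z : ℝ) = ∑ b ∈ B, l b * (b z : ℝ)) :
    (∀ a ∈ A, a ≠ (fun _ => 1) → a x = 0 ∧ a y = 0) ∧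
    (∀ b ∈ B, b ≠ (fun _ => 1) → b x = 0 ∧ b y = 0) ∧
    k (fun _ => 1) = l (fun _ => 1) := by
  set one : X → ℕ := (fun _ => 1) with hone
  -- split sums
  have hAsplit : ∀ z : X, ∑ a ∈ A, k a * (a z : ℝ)
      = k one * (one z : ℝ) + ∑ a ∈ A.erase one, k a * (a z : ℝ) := by
    intro z
    exact (Finset.add_sum_erase A (fun a => k a * (a z : ℝ)) hA1).symm
  have hBsplit : ∀ z : X, ∑ b ∈ B, l b * (b z : ℝ)
      = l one * (one z : ℝ) + ∑ b ∈ B.erase one, l b * (b z : ℝ) := by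
    intro z
    exact (Finset.add_sum_erase B (fun b => l b * (b z : ℝ)) hB1).symm
  -- at y, B side collapses
  have hBy0 : ∑ b ∈ B.erase one, l b * (b y : ℝ) = 0 := by
    apply Finset.sum_eq_zero
    intro b hb
    rw [hBy b (Finset.mem_of_mem_erase hb) (Finset.ne_of_mem_erase hb)]
    simp
  have hAx0 : ∑ a ∈ A.erase one, k a * (a x : ℝ) = 0 := by
    apply Finset.sum_eq_zero
    intro a ha
    rw [hAx a (Finset.mem_of_mem_erase ha) (Finset.ne_of_mem_erase ha)]
    simp
  have hy := heq y
  have hx := heq x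
  rw [hAsplit y, hBsplit y, hBy0] at hy
  rw [hAsplit x, hBsplit x, hAx0] at hx
  simp only [hone, Nat.cast_one, mul_one, add_zero] at hy hx
  -- hy : k one + SA = l one ; hx : k one = l one + SB
  set SA := ∑ a ∈ A.erase one, k a * (a y : ℝ) with hSA
  set SB := ∑ b ∈ B.erase one, l b * (b x : ℝ) with hSB
  have hSAnn : ∀ a ∈ A.erase one, 0 ≤ k a * (a y : ℝ) := by
    intro a ha
    exact mul_nonneg (hk a (Finset.mem_of_mem_erase ha)).le (Nat.cast_nonneg _)
  have hSBnn : ∀ b ∈ B.erase one, 0 ≤ l b * (b x : ℝ) := by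
    intro b hb
    exact mul_nonneg (hl b (Finset.mem_of_mem_erase hb)).le (Nat.cast_nonneg _)
  have hSA0 : SA = 0 := by
    have h1 : 0 ≤ SA := Finset.sum_nonneg hSAnn
    have h2 : 0 ≤ SB := Finset.sum_nonneg hSBnn
    linarith
  have hSB0 : SB = 0 := by
    have h1 : 0 ≤ SA := Finset.sum_nonneg hSAnn
    have h2 : 0 ≤ SB := Finset.sum_nonneg hSBnn
    linarith
  have hkl : k one = l one := by linarith
  have hAyz : ∀ a ∈ A, a ≠ one → a y = 0 := by
    intro a ha hne
    have hmem : a ∈ A.erase one := Finset.mem_erase.2 ⟨hne, ha⟩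
    have := (Finset.sum_eq_zero_iff_of_nonneg hSAnn).1 hSA0 a hmem
    have hkpos := hk a ha
    have : (a y : ℝ) = 0 := by
      rcases mul_eq_zero.1 this with h | h
      · exact absurd h hkpos.ne'
      · exact h
    exact_mod_cast this
  have hBxz : ∀ b ∈ B, b ≠ one → b x = 0 := by
    intro b hb hne
    have hmem : b ∈ B.erase one := Finset.mem_erase.2 ⟨hne, hb⟩
    have := (Finset.sum_eq_zero_iff_of_nonneg hSBnn).1 hSB0 b hmem
    have hlpos := hl b hb
    have : (b x : ℝ) = 0 := by
      rcases mul_eq_zero.1 this with h | h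
      · exact absurd h hlpos.ne'
      · exact h
    exact_mod_cast this
  exact ⟨fun a ha hne => ⟨hAx a ha hne, hAyz a ha hne⟩,
    fun b hb hne => ⟨hBxz b hb hne, hBy b hb hne⟩, hkl⟩
end

section
/- Let C be a simplicial complex with vertex set contained in ℝ^n, and suppose the inclusion map faithfully realizes C: for all α, β ∈ C and positive coefficients (k_a)_{a∈α}, (l_b)_{b∈β}, the equality Σ_{a∈α} k_a·a = Σ_{b∈β} l_b·b implies α = β and k_a = l_a for all a. Let D be another simplicial complex realized faithfully by g : ⋃D → ℝ^n with ⋃{cone(g[δ]) : δ ∈ D} ⊆ ⋃{cone(α) : α ∈ C}. If L : ℝ^n → ℝ^m is a linear map such that L restricted to ⋃C (composed with inclusion) faithfully realizes C, then L∘g faithfully realizes D. -/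
/-- f faithfully realizes the simplicial complex C: equal positive
combinations of (the f-images of) two faces force the faces and the
coefficients to coincide. -/
def FaithfullyRealizes {V E : Type*} [AddCommMonoid E] [Module ℝ E]
    (f : V → E) (C : Set (Finset V)) : Prop :=
  ∀ α ∈ C, ∀ β ∈ C, ∀ k l : V → ℝ,
    (∀ a ∈ α, 0 < k a) → (∀ b ∈ β, 0 < l b) →
    ∑ a ∈ α, k a • f a = ∑ b ∈ β, l b • f b →
    α = β ∧ ∀ a ∈ α, k a = l a

/-- The cone spanned by the f-images of a finite set of vertices: all
nonnegative combinations. -/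
def coneOf {V E : Type*} [AddCommMonoid E] [Module ℝ E]
    (f : V → E) (α : Finset V) : Set E :=
  {x | ∃ c : V → ℝ, (∀ a ∈ α, 0 ≤ c a) ∧ x = ∑ a ∈ α, c a • f a}

/-- Proposition 6.1: if the inclusion faithfully realizes C, g faithfully
realizes D, the cones of D are contained in the cones of C, and a linear map
L is such that L (restricted to the vertices of C) faithfully realizes C,
then L ∘ g faithfully realizes D. -/
theorem stmt13 {n m : ℕ} {W : Type*}
    (C : Set (Finset (Fin n → ℝ))) (hCsc : IsSimplicialComplex C)
    (D : Set (Finset W)) (hDsc : IsSimplicialComplex D)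
    (g : W → Fin n → ℝ)
    (hC : FaithfullyRealizes id C) (hD : FaithfullyRealizes g D)
    (hsub : (⋃ δ ∈ D, coneOf g δ) ⊆ ⋃ α ∈ C, coneOf id α)
    (L : (Fin n → ℝ) →ₗ[ℝ] (Fin m → ℝ))
    (hL : FaithfullyRealizes (⇑L) C) :
    FaithfullyRealizes (⇑L ∘ g) D := by
  intro α hα β hβ k l hk hl heq
  have hx : (∑ a ∈ α, k a • g a) ∈ ⋃ δ ∈ D, coneOf g δ :=
    Set.mem_biUnion hα ⟨k, fun a ha => (hk a ha).le, rfl⟩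
  have hy : (∑ b ∈ β, l b • g b) ∈ ⋃ δ ∈ D, coneOf g δ :=
    Set.mem_biUnion hβ ⟨l, fun b hb => (hl b hb).le, rfl⟩
  obtain ⟨_, ⟨γ, rfl⟩, _, ⟨hγ, rfl⟩, c, hc, hxe⟩ := hsub hx
  obtain ⟨_, ⟨γ', rfl⟩, _, ⟨hγ', rfl⟩, c', hc', hye⟩ := hsub hy
  set γ₀ := γ.filter (fun v => 0 < c v) with hγ₀def
  set γ₀' := γ'.filter (fun v => 0 < c' v) with hγ₀'def
  have hγ₀ : γ₀ ∈ C := hCsc.2 γ hγ γ₀ (Finset.filter_subset _ _)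
  have hγ₀' : γ₀' ∈ C := hCsc.2 γ' hγ' γ₀' (Finset.filter_subset _ _)
  have hxs : (∑ a ∈ α, k a • g a) = ∑ v ∈ γ₀, c v • v := by
    rw [hxe]
    refine (Finset.sum_subset (Finset.filter_subset _ _) ?_).symm
    intro v hv hv'
    have : c v = 0 := le_antisymm (by simpa [hγ₀def, hv] using hv') (hc v hv)
    simp [this]
  have hys : (∑ b ∈ β, l b • g b) = ∑ v ∈ γ₀', c' v • v := by
    rw [hye]
    refine (Finset.sum_subset (Finset.filter_subset _ _) ?_).symm
    intro v hv hv'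
    have : c' v = 0 := le_antisymm (by simpa [hγ₀'def, hv] using hv') (hc' v hv)
    simp [this]
  have hLsum : ∑ v ∈ γ₀, c v • L v = ∑ v ∈ γ₀', c' v • L v := by
    have h1 : L (∑ a ∈ α, k a • g a) = L (∑ b ∈ β, l b • g b) := by
      rw [map_sum, map_sum]
      simpa [map_smul] using heq
    rw [hxs, hys, map_sum, map_sum] at h1
    simpa [map_smul] using h1
  obtain ⟨hfeq, hceq⟩ := hL γ₀ hγ₀ γ₀' hγ₀' c c'
    (fun v hv => (Finset.mem_filter.mp hv).2)
    (fun v hv => (Finset.mem_filter.mp hv).2) hLsum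
  have hxy : (∑ a ∈ α, k a • g a) = ∑ b ∈ β, l b • g b := by
    rw [hxs, hys, ← hfeq]
    exact Finset.sum_congr rfl fun v hv => by rw [hceq v hv]
  exact hD α hα β hβ k l hk hl hxy
end

section
/- Let L be a finite meet-semilattice and α ∈ L an element other than the bottom. Define the combinatorial blowup Bl_α L with underlying set {γ ∈ L : γ ≱ α} ∪ {(α, γ) : γ ∈ L, γ ≱ α, and γ ∨ α exists in L}, ordered by: β > γ iff β > γ in L; (α, β) > (α, γ) iff β > γ in L; (α, β) > γ iff β ≥ γ in L. Then Bl_α L is again a meet-semilattice. -/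
/-- The underlying set of the Feichtner–Kozlov combinatorial blowup of a
meet-semilattice L at α: the elements γ with γ ≱ α, together with the pairs
(α, γ) for γ ≱ α such that the join γ ∨ α exists. -/
def BlowCarrier {L : Type*} [Preorder L] (α : L) : Type _ :=
  {γ : L // ¬ α ≤ γ} ⊕ {γ : L // ¬ α ≤ γ ∧ ∃ j, IsLUB {γ, α} j}

/-- The order of the combinatorial blowup: β ≤ γ iff β ≤ γ in L;
(α,β) ≤ (α,γ) iff β ≤ γ in L; γ ≤ (α,β) iff γ ≤ β in L;
and (α,β) ≤ γ never holds. -/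
def blowLE {L : Type*} [Preorder L] (α : L) :
    BlowCarrier α → BlowCarrier α → Prop
  | Sum.inl β, Sum.inl γ => β.1 ≤ γ.1
  | Sum.inl β, Sum.inr γ => β.1 ≤ γ.1
  | Sum.inr _, Sum.inl _ => False
  | Sum.inr β, Sum.inr γ => β.1 ≤ γ.1

/-- In a finite meet-semilattice, a pair with an upper bound has a LUB. -/
lemma exists_lub_of_bdd {L : Type*} [Fintype L] [SemilatticeInf L]
    (x y u : L) (hx : x ≤ u) (hy : y ≤ u) : ∃ j, IsLUB {x, y} j := by
  classical
  let S : Finset L := Finset.univ.filter (fun v => x ≤ v ∧ y ≤ v)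
  have hu : u ∈ S := by simp [S, hx, hy]
  have hne : S.Nonempty := ⟨u, hu⟩
  have h1 : x ≤ S.inf' hne id :=
    Finset.le_inf' hne id fun v hv => (Finset.mem_filter.mp hv).2.1
  have h2 : y ≤ S.inf' hne id :=
    Finset.le_inf' hne id fun v hv => (Finset.mem_filter.mp hv).2.2
  refine ⟨S.inf' hne id, ?_, ?_⟩
  · intro z hz
    simp only [Set.mem_insert_iff, Set.mem_singleton_iff] at hz
    rcases hz with rfl | rfl
    exacts [h1, h2]
  · intro v hv
    have hvS : v ∈ S := by
      simp only [S, Finset.mem_filter, Finset.mem_univ, true_and]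
      exact ⟨hv (by simp), hv (by simp)⟩
    exact Finset.inf'_le id hvS

/-- The combinatorial blowup of a finite meet-semilattice at a non-bottom
element is again a meet-semilattice: the blowup order is a partial order in
which every pair of elements has a greatest lower bound. -/
theorem stmt16 {L : Type*} [Fintype L] [SemilatticeInf L] [OrderBot L]
    (α : L) (hα : α ≠ ⊥) :
    (∀ a : BlowCarrier α, blowLE α a a) ∧
    (∀ a b c : BlowCarrier α, blowLE α a b → blowLE α b c → blowLE α a c) ∧
    (∀ a b : BlowCarrier α, blowLE α a b → blowLE α b a → a = b) ∧
    (∀ a b : BlowCarrier α, ∃ c, blowLE α c a ∧ blowLE α c b ∧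
      ∀ d, blowLE α d a → blowLE α d b → blowLE α d c) := by
  refine ⟨?_, ?_, ?_, ?_⟩
  · rintro (β | β) <;> exact le_refl _
  · rintro (a | a) (b | b) (c | c) hab hbc <;>
      simp only [blowLE] at * <;> first | exact le_trans hab hbc | exact hab | exact hbc
  · rintro (a | a) (b | b) hab hba
    · exact congrArg Sum.inl (Subtype.ext (le_antisymm hab hba))
    · exact (hba : False).elim
    · exact (hab : False).elim
    · exact congrArg Sum.inr (Subtype.ext (le_antisymm hab hba))
  · rintro (a | a) (b | b)
    · refine ⟨Sum.inl ⟨a.1 ⊓ b.1, fun h => a.2 (h.trans inf_le_left)⟩,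
        inf_le_left, inf_le_right, ?_⟩
      rintro (d | d) hda hdb
      · exact le_inf hda hdb
      · exact hda.elim
    · refine ⟨Sum.inl ⟨a.1 ⊓ b.1, fun h => a.2 (h.trans inf_le_left)⟩,
        inf_le_left, inf_le_right, ?_⟩
      rintro (d | d) hda hdb
      · exact le_inf hda hdb
      · exact hda.elim
    · refine ⟨Sum.inl ⟨a.1 ⊓ b.1, fun h => b.2 (h.trans inf_le_right)⟩,
        inf_le_left, inf_le_right, ?_⟩
      rintro (d | d) hda hdb
      · exact le_inf hda hdb
      · exact hdb.elim
    · obtain ⟨j, hj⟩ := a.2.2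
      have hja : a.1 ≤ j := hj.1 (by simp)
      have hjα : α ≤ j := hj.1 (by simp)
      refine ⟨Sum.inr ⟨a.1 ⊓ b.1, fun h => a.2.1 (h.trans inf_le_left),
        exists_lub_of_bdd _ _ j (inf_le_left.trans hja) hjα⟩,
        inf_le_left, inf_le_right, ?_⟩
      rintro (d | d) hda hdb
      · exact le_inf hda hdb
      · exact le_inf hda hdb
end

section
/- Let C be a simplicial complex whose vertex set Y lies in the free commutative semigroup T(X) for a finite nonempty set X, such that κ_X faithfully realizes C, and let α ∈ C be nonempty. Then the family {γ ∈ C : α ⊄ γ} ∪ {γ ∪ {α⁺} : γ ∈ C, α ⊄ γ, α ∪ γ ∈ C}, where α⁺ is the sum of the elements of α in T(X), is a simplicial complex isomorphic to the Feichtner–Kozlov combinatorial blowup Bl_α C of the meet-semilattice C at α. -/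
/-!
Faithfulness forces every face containing the vertex `s = α⁺` to contain `α`: otherwise
`{s}` would be a face whose realization `κ(α⁺) = ∑_{a ∈ α} κ(a)` coincides with that of `α`,
so `α = {s}`. Hence the faces of the new family that avoid `s` are exactly the faces of `C` not
containing `α`, and those that contain `s` are the cones `insert s γ` over faces `γ ∌ α` whose
join with `α` exists in `C`, i.e. with `α ∪ γ ∈ C`. Erasing `s` identifies the two kinds with the
two summands of `Bl_α C`, and inclusion of faces matches the blowup order.
-/

theorem FaithfullyRealizes.subset_of_sum_mem {V E : Type*} [AddCommMonoid V] [AddCommMonoid E]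
    [Module ℝ E] {f : V →+ E} {C : Set (Finset V)} (hf : FaithfullyRealizes f C)
    (hC : IsSimplicialComplex C) {α γ : Finset V} (hα : α ∈ C) (hγ : γ ∈ C)
    (h : ∑ a ∈ α, a ∈ γ) : α ⊆ γ := by
  have hsingle : {∑ a ∈ α, a} ∈ C := hC.2 γ hγ _ (Finset.singleton_subset_iff.2 h)
  have hsum : ∑ a ∈ α, (1 : ℝ) • f a = ∑ b ∈ {∑ a ∈ α, a}, (1 : ℝ) • f b := by
    simp only [one_smul, Finset.sum_singleton, map_sum]
  rw [(hf α hα _ hsingle _ _ (fun _ _ => one_pos) (fun _ _ => one_pos) hsum).1]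
  exact Finset.singleton_subset_iff.2 h

theorem exists_isLUB_pair_iff_union_mem {V : Type*} [DecidableEq V] {C : Set (Finset V)}
    {α β : Finset V} (hC : IsSimplicialComplex C) (hα : α ∈ C) (hβ : β ∈ C) :
    (∃ j, IsLUB ({⟨β, hβ⟩, ⟨α, hα⟩} : Set {γ // γ ∈ C}) j) ↔ α ∪ β ∈ C := by
  constructor
  · rintro ⟨j, hj⟩
    have hβj : β ⊆ j.1 := hj.1 (Set.mem_insert _ _)
    have hαj : α ⊆ j.1 := hj.1 (Set.mem_insert_of_mem _ rfl)
    exact hC.2 j.1 j.2 _ (Finset.union_subset hαj hβj)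
  · intro h
    refine ⟨⟨α ∪ β, h⟩, ?_, fun u hu => ?_⟩
    · rintro x (rfl | rfl)
      exacts [Finset.subset_union_right, Finset.subset_union_left]
    · exact Finset.union_subset (hu (Set.mem_insert_of_mem _ rfl)) (hu (Set.mem_insert _ _))

section StellarSubdivision

variable {V : Type*} [DecidableEq V]

def stellarSubdivision (C : Set (Finset V)) (α : Finset V) (s : V) : Set (Finset V) :=
  {γ ∈ C | ¬ α ⊆ γ} ∪
    {β : Finset V | ∃ γ ∈ C, ¬ α ⊆ γ ∧ α ∪ γ ∈ C ∧ β = insert s γ}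

variable {C : Set (Finset V)} {α β : Finset V} {s : V}

theorem mem_stellarSubdivision_of_notMem (hsβ : s ∉ β) :
    β ∈ stellarSubdivision C α s ↔ β ∈ C ∧ ¬ α ⊆ β := by
  refine ⟨?_, Or.inl⟩
  rintro (hβ | ⟨γ, -, -, -, rfl⟩)
  · exact hβ
  · exact absurd (Finset.mem_insert_self s γ) hsβ

theorem mem_stellarSubdivision_of_mem (hs : ∀ γ ∈ C, s ∈ γ → α ⊆ γ) (hsβ : s ∈ β) :
    β ∈ stellarSubdivision C α s ↔
      β.erase s ∈ C ∧ ¬ α ⊆ β.erase s ∧ α ∪ β.erase s ∈ C := by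
  constructor
  · rintro (⟨hβ, hαβ⟩ | ⟨γ, hγ, hαγ, hαγC, rfl⟩)
    · exact absurd (hs β hβ hsβ) hαβ
    · rw [Finset.erase_insert fun h => hαγ (hs γ hγ h)]
      exact ⟨hγ, hαγ, hαγC⟩
  · rintro ⟨hβC, hαβ, hαβC⟩
    exact Or.inr ⟨_, hβC, hαβ, hαβC, (Finset.insert_erase hsβ).symm⟩

theorem IsSimplicialComplex.stellarSubdivision (hC : IsSimplicialComplex C)
    (hs : ∀ γ ∈ C, s ∈ γ → α ⊆ γ) (hα : α.Nonempty) :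
    IsSimplicialComplex (stellarSubdivision C α s) := by
  refine ⟨Or.inl ⟨hC.1, fun h => hα.ne_empty (Finset.subset_empty.1 h)⟩, fun β hβ δ hδβ => ?_⟩
  by_cases hsδ : s ∈ δ
  · obtain ⟨hβC, hαβ, hαβC⟩ := (mem_stellarSubdivision_of_mem hs (hδβ hsδ)).1 hβ
    have hδβ' : δ.erase s ⊆ β.erase s := Finset.erase_subset_erase s hδβ
    exact (mem_stellarSubdivision_of_mem hs hsδ).2 ⟨hC.2 _ hβC _ hδβ',
      fun h => hαβ (h.trans hδβ'), hC.2 _ hαβC _ (Finset.union_subset_union_right hδβ')⟩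
  · rw [mem_stellarSubdivision_of_notMem hsδ]
    by_cases hsβ : s ∈ β
    · obtain ⟨hβC, hαβ, -⟩ := (mem_stellarSubdivision_of_mem hs hsβ).1 hβ
      have hδβ' : δ ⊆ β.erase s := Finset.subset_erase.2 ⟨hδβ, hsδ⟩
      exact ⟨hC.2 _ hβC _ hδβ', fun h => hαβ (h.trans hδβ')⟩
    · obtain ⟨hβC, hαβ⟩ := (mem_stellarSubdivision_of_notMem hsβ).1 hβ
      exact ⟨hC.2 _ hβC _ hδβ, fun h => hαβ (h.trans hδβ)⟩

def stellarSubdivisionEquivBlowup (hC : IsSimplicialComplex C) (hα : α ∈ C)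
    (hs : ∀ γ ∈ C, s ∈ γ → α ⊆ γ) :
    stellarSubdivision C α s ≃ BlowCarrier (⟨α, hα⟩ : {γ // γ ∈ C}) where
  toFun β :=
    if h : s ∈ β.1 then
      have hβ := (mem_stellarSubdivision_of_mem hs h).1 β.2
      Sum.inr ⟨⟨β.1.erase s, hβ.1⟩, hβ.2.1,
        (exists_isLUB_pair_iff_union_mem hC hα hβ.1).2 hβ.2.2⟩
    else
      have hβ := (mem_stellarSubdivision_of_notMem h).1 β.2
      Sum.inl ⟨⟨β.1, hβ.1⟩, hβ.2⟩
  invFun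
    | Sum.inl γ => ⟨γ.1.1, Or.inl ⟨γ.1.2, γ.2⟩⟩
    | Sum.inr γ => ⟨insert s γ.1.1, Or.inr ⟨γ.1.1, γ.1.2, γ.2.1,
        (exists_isLUB_pair_iff_union_mem hC hα γ.1.2).1 γ.2.2, rfl⟩⟩
  left_inv β := by
    by_cases h : s ∈ β.1
    · simp only [h, ↓reduceDIte]
      exact Subtype.ext (Finset.insert_erase h)
    · simp only [h, ↓reduceDIte]
  right_inv
    | Sum.inl γ => by
      have h : s ∉ γ.1.1 := fun h => γ.2 (hs _ γ.1.2 h)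
      simp only [h, ↓reduceDIte]
      rfl
    | Sum.inr γ => by
      have h : s ∉ γ.1.1 := fun h => γ.2.1 (hs _ γ.1.2 h)
      simp only [Finset.mem_insert_self, ↓reduceDIte]
      exact congrArg Sum.inr (Subtype.ext (Subtype.ext (Finset.erase_insert h)))

theorem subset_iff_blowLE_stellarSubdivisionEquivBlowup (hC : IsSimplicialComplex C)
    (hα : α ∈ C) (hs : ∀ γ ∈ C, s ∈ γ → α ⊆ γ) (β δ : stellarSubdivision C α s) :
    β.1 ⊆ δ.1 ↔ blowLE _ (stellarSubdivisionEquivBlowup hC hα hs β)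
      (stellarSubdivisionEquivBlowup hC hα hs δ) := by
  by_cases hsβ : s ∈ β.1 <;> by_cases hsδ : s ∈ δ.1 <;>
    simp only [stellarSubdivisionEquivBlowup, Equiv.coe_fn_mk, hsβ, hsδ, ↓reduceDIte, blowLE,
      Subtype.mk_le_mk]
  · rw [← Finset.subset_insert_iff, Finset.insert_erase hsδ]
  · exact iff_false_intro fun h => hsδ (h hsβ)
  · rw [Finset.subset_erase, and_iff_left hsβ]

end StellarSubdivision

theorem stmt17_general {X : Type*} [Fintype X]
    (C : Set (Finset (X → ℕ))) (hC : IsSimplicialComplex C)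
    (hfaith : FaithfullyRealizes (fun (v : X → ℕ) (x : X) => (v x : ℝ)) C)
    (α : Finset (X → ℕ)) (hα : α ∈ C) (hne : α.Nonempty) :
    IsSimplicialComplex
      ({γ ∈ C | ¬ α ⊆ γ} ∪
        {β : Finset (X → ℕ) | ∃ γ ∈ C, ¬ α ⊆ γ ∧ α ∪ γ ∈ C ∧
          β = insert (∑ a ∈ α, a) γ}) ∧
    ∃ e : {β : Finset (X → ℕ) //
        β ∈ ({γ ∈ C | ¬ α ⊆ γ} ∪
          {β : Finset (X → ℕ) | ∃ γ ∈ C, ¬ α ⊆ γ ∧ α ∪ γ ∈ C ∧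
            β = insert (∑ a ∈ α, a) γ})} ≃
        BlowCarrier (⟨α, hα⟩ : {γ : Finset (X → ℕ) // γ ∈ C}),
      ∀ a b, a.1 ⊆ b.1 ↔ blowLE _ (e a) (e b) := by
  have hκ : FaithfullyRealizes ((Nat.castAddMonoidHom ℝ).compLeft X) C := hfaith
  have hs : ∀ γ ∈ C, ∑ a ∈ α, a ∈ γ → α ⊆ γ := fun γ hγ =>
    hκ.subset_of_sum_mem hC hα hγ
  exact ⟨hC.stellarSubdivision hs hne, stellarSubdivisionEquivBlowup hC hα hs,
    subset_iff_blowLE_stellarSubdivisionEquivBlowup hC hα hs⟩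

/-- For a simplicial complex C with vertices in T(X) ≅ ℕ^X − {0} faithfully
realized by κ_X, and a nonempty face α ∈ C, the family
{γ ∈ C : α ⊄ γ} ∪ {γ ∪ {α⁺} : γ ∈ C, α ⊄ γ, α ∪ γ ∈ C}, where α⁺ = Σ_{a∈α} a,
is a simplicial complex order-isomorphic to the combinatorial blowup Bl_α C
of the meet-semilattice C at α. -/
theorem stmt17 {X : Type*} [Fintype X] [Nonempty X] [DecidableEq X]
    (C : Set (Finset (X → ℕ))) (hC : IsSimplicialComplex C)
    (hnz : ∀ γ ∈ C, ∀ v ∈ γ, v ≠ 0)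
    (hfaith : FaithfullyRealizes (fun (v : X → ℕ) (x : X) => (v x : ℝ)) C)
    (α : Finset (X → ℕ)) (hα : α ∈ C) (hne : α.Nonempty) :
    IsSimplicialComplex
      ({γ ∈ C | ¬ α ⊆ γ} ∪
        {β : Finset (X → ℕ) | ∃ γ ∈ C, ¬ α ⊆ γ ∧ α ∪ γ ∈ C ∧
          β = insert (∑ a ∈ α, a) γ}) ∧
    ∃ e : {β : Finset (X → ℕ) //
        β ∈ ({γ ∈ C | ¬ α ⊆ γ} ∪
          {β : Finset (X → ℕ) | ∃ γ ∈ C, ¬ α ⊆ γ ∧ α ∪ γ ∈ C ∧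
            β = insert (∑ a ∈ α, a) γ})} ≃
        BlowCarrier (⟨α, hα⟩ : {γ : Finset (X → ℕ) // γ ∈ C}),
      ∀ a b, a.1 ⊆ b.1 ↔ blowLE _ (e a) (e b) :=
  stmt17_general C hC hfaith α hα hne
end
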